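/- arXiv:1211.2144 — 2 statements merged into one kernel-verified Lean document; each statement's English description precedes it below -/
import Mathlib

section
/- Let n ≥ 1 and let Dic_n be the dicyclic group of order 4n. Let ≈ be the equivalence relation on the set C(Dic_n) = {(g,k) : g*k = k*g} of commuting pairs generated by (g,k) ≈ (g, k*g) and (g,k) ≈ (k, g⁻¹). Then the number of equivalence classes of ≈ equals the number of commutative (abelian) subgroups of Dic_n. -/
/-- The set of commuting pairs of a group `G`. -/
def CommPairs (G : Type*) [Group G] : Type _ := {p : G × G // p.1 * p.2 = p.2 * p.1}

/-- The base relation on commuting pairs: `(g,k) ↦ (g, k*g)` and `(g,k) ↦ (k, g⁻¹)`. -/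
def genRel (G : Type*) [Group G] : CommPairs G → CommPairs G → Prop :=
  fun x y => (y.1 : G × G) = (x.1.1, x.1.2 * x.1.1) ∨ (y.1 : G × G) = (x.1.2, x.1.1⁻¹)

/-!
The moves `(g, k) ↦ (g, k * g)` and `(g, k) ↦ (k, g⁻¹)` preserve the subgroup `⟨g, k⟩`, which is
abelian, so `[(g, k)] ↦ ⟨g, k⟩` maps the classes to the abelian subgroups. When every abelian
subgroup is cyclic this map is bijective: writing `g = x ^ s`, `k = x ^ t`, the moves act on the
exponents `(s, t)` as the steps of Euclid's algorithm, so every class contains a pair `(y, 1)`,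
and `(y, 1) ≈ (z, 1)` as soon as `⟨y⟩ = ⟨z⟩`. In `Dic_n` every abelian subgroup is cyclic: one
containing some `xa j` lies in the centralizer of `xa j`, which is `⟨xa j⟩`, and the others lie
in `⟨a 1⟩`.
-/

open Subgroup

section CommutingPairs

variable {G : Type*} [Group G]

def pairClass (g k : G) (h : Commute g k) : Quot (genRel G) := Quot.mk _ ⟨(g, k), h⟩

theorem pairClass_mul_right {g k : G} (h : Commute g k) :
    pairClass g (k * g) (h.mul_right (.refl g)) = pairClass g k h :=
  (Quot.sound (.inl rfl)).symm

theorem pairClass_swap {g k : G} (h : Commute g k) :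
    pairClass g k h = pairClass k g⁻¹ h.symm.inv_right :=
  Quot.sound (.inr rfl)

theorem pairClass_mul_zpow {g k : G} (h : Commute g k) (q : ℤ) :
    pairClass g (k * g ^ q) (h.mul_right (.self_zpow g q)) = pairClass g k h := by
  induction q using Int.induction_on with
  | zero => simp only [zpow_zero, mul_one]
  | succ q ih =>
    simp only [zpow_add_one, ← mul_assoc]
    exact (pairClass_mul_right _).trans ih
  | pred q ih =>
    rw [← ih, ← pairClass_mul_right]
    simp only [mul_assoc, ← zpow_add_one, sub_add_cancel]

def powClass (x : G) (s t : ℤ) : Quot (genRel G) :=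
  pairClass (x ^ s) (x ^ t) (Commute.zpow_zpow_self x s t)

theorem powClass_add_mul (x : G) (s t q : ℤ) : powClass x s (t + s * q) = powClass x s t := by
  simp only [powClass, zpow_add, zpow_mul]
  exact pairClass_mul_zpow _ q

theorem powClass_swap (x : G) (s t : ℤ) : powClass x s t = powClass x t (-s) := by
  simp only [powClass, zpow_neg]
  exact pairClass_swap _

-- One step of Euclid's algorithm: `(s, t) ≈ (t, -s) ≈ (t, -(s % t))`.
theorem exists_powClass_eq_powClass_zero (x : G) (s t : ℤ) :
    ∃ d, powClass x s t = powClass x d 0 := by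
  by_cases ht : t = 0
  · exact ⟨s, by rw [ht]⟩
  · obtain ⟨d, hd⟩ := exists_powClass_eq_powClass_zero x t (-(s % t))
    refine ⟨d, ?_⟩
    rw [powClass_swap, ← hd, ← powClass_add_mul x t (-s) (s / t), Int.emod_def]
    ring_nf
termination_by t.natAbs
decreasing_by
  rw [Int.natAbs_neg]
  have := Int.emod_nonneg s ht
  have := Int.emod_lt s ht
  omega

theorem exists_pairClass_eq_pairClass_one {g k x : G} (h : Commute g k)
    (hg : g ∈ zpowers x) (hk : k ∈ zpowers x) :
    ∃ y, pairClass g k h = pairClass y 1 (.one_right y) := by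
  obtain ⟨s, rfl⟩ := hg
  obtain ⟨t, rfl⟩ := hk
  obtain ⟨d, hd⟩ := exists_powClass_eq_powClass_zero x s t
  exact ⟨x ^ d, by simpa only [powClass, zpow_zero] using hd⟩

theorem pairClass_one_eq_of_zpowers_eq {y z : G} (h : zpowers y = zpowers z) :
    pairClass y 1 (.one_right y) = pairClass z 1 (.one_right z) := by
  obtain ⟨e, rfl⟩ : z ∈ zpowers y := h ▸ mem_zpowers z
  obtain ⟨c, hc⟩ : y ∈ zpowers (y ^ e) := h ▸ mem_zpowers y
  rw [← pairClass_mul_zpow (.one_right y) e, ← pairClass_mul_zpow (.one_right (y ^ e)) (-c)]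
  simp only [one_mul, zpow_neg, hc]
  exact pairClass_swap _

theorem closure_pair_mul_right (g k : G) : closure {g, k * g} = closure {g, k} := by
  have hg : g ∈ closure {g, k} := subset_closure (by simp)
  have hk : k ∈ closure {g, k} := subset_closure (by simp)
  have hg' : g ∈ closure {g, k * g} := subset_closure (by simp)
  have hkg : k * g ∈ closure {g, k * g} := subset_closure (by simp)
  refine le_antisymm ?_ ?_ <;> rw [closure_le, Set.pair_subset_iff]
  · exact ⟨hg, mul_mem hk hg⟩
  · exact ⟨hg', by simpa using mul_mem hkg (inv_mem hg')⟩

theorem closure_pair_swap (g k : G) : closure {k, g⁻¹} = closure {g, k} := by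
  have hg : g ∈ closure {g, k} := subset_closure (by simp)
  have hk : k ∈ closure {g, k} := subset_closure (by simp)
  have hk' : k ∈ closure {k, g⁻¹} := subset_closure (by simp)
  have hg' : g⁻¹ ∈ closure {k, g⁻¹} := subset_closure (by simp)
  refine le_antisymm ?_ ?_ <;> rw [closure_le, Set.pair_subset_iff]
  · exact ⟨hk, inv_mem hg⟩
  · exact ⟨by simpa using inv_mem hg', hk'⟩

theorem closure_pair_one (x : G) : closure {x, 1} = zpowers x := by
  rw [Set.pair_comm, closure_insert_one, zpowers_eq_closure]

theorem isMulCommutative_closure_pair {g k : G} (h : Commute g k) :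
    IsMulCommutative (closure {g, k}) :=
  isMulCommutative_closure <| by
    rintro x (rfl | rfl) y (rfl | rfl)
    exacts [rfl, h, h.symm, rfl]

def commClosure : Quot (genRel G) → {H : Subgroup G // ∀ a ∈ H, ∀ b ∈ H, a * b = b * a} :=
  Quot.lift
    (fun p => ⟨closure {p.1.1, p.1.2},
      isMulCommutative_iff_of_setLike.mp (isMulCommutative_closure_pair p.2)⟩)
    (by
      rintro ⟨⟨g, k⟩, _⟩ ⟨⟨g', k'⟩, _⟩ (h | h) <;> obtain ⟨rfl, rfl⟩ := Prod.mk.inj h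
      · exact Subtype.ext (closure_pair_mul_right _ _).symm
      · exact Subtype.ext (closure_pair_swap _ _).symm)

theorem commClosure_pairClass (g k : G) (h : Commute g k) :
    (commClosure (pairClass g k h)).1 = closure {g, k} :=
  rfl

end CommutingPairs

theorem card_quot_genRel_eq_card_commutative_subgroups {G : Type*} [Group G]
    (hG : ∀ H : Subgroup G, IsMulCommutative H → IsCyclic H) :
    Nat.card (Quot (genRel G)) =
      Nat.card {H : Subgroup G // ∀ a ∈ H, ∀ b ∈ H, a * b = b * a} := by
  have normal_form : ∀ c : Quot (genRel G), ∃ y, c = pairClass y 1 (.one_right y) := by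
    rintro ⟨⟨g, k⟩, h⟩
    obtain ⟨x, hx⟩ := (closure {g, k}).isCyclic_iff_exists_zpowers_eq_top.mp
      (hG _ (isMulCommutative_closure_pair h))
    have hgk : {g, k} ⊆ (zpowers x : Set G) := hx ▸ subset_closure
    exact exists_pairClass_eq_pairClass_one h (hgk (by simp)) (hgk (by simp))
  refine Nat.card_eq_of_bijective commClosure ⟨fun c c' hcc' => ?_, fun ⟨H, hH⟩ => ?_⟩
  · obtain ⟨y, rfl⟩ := normal_form c
    obtain ⟨z, rfl⟩ := normal_form c'
    have := congrArg Subtype.val hcc'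
    rw [commClosure_pairClass, commClosure_pairClass, closure_pair_one, closure_pair_one] at this
    exact pairClass_one_eq_of_zpowers_eq this
  · obtain ⟨x, rfl⟩ := H.isCyclic_iff_exists_zpowers_eq_top.mp
      (hG H (IsMulCommutative.of_setLike_mul_comm hH))
    exact ⟨pairClass x 1 (.one_right x), Subtype.ext (closure_pair_one x)⟩

theorem ZMod.eq_zero_or_eq_of_add_self_eq_zero {n : ℕ} {i : ZMod (2 * n)} (h : i + i = 0) :
    i = 0 ∨ i = n := by
  obtain ⟨m, rfl⟩ := ZMod.intCast_surjective i
  have h2 : ((2 * n : ℕ) : ℤ) ∣ 2 * m := by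
    rw [← ZMod.intCast_zmod_eq_zero_iff_dvd]; push_cast; linear_combination h
  obtain ⟨q, rfl⟩ : (n : ℤ) ∣ m := by
    push_cast at h2; exact Int.dvd_of_mul_dvd_mul_left two_ne_zero h2
  have hn : ((2 * n : ℕ) : ZMod (2 * n)) = 0 := ZMod.natCast_self _
  push_cast at hn ⊢
  rcases Int.even_or_odd' q with ⟨r, rfl | rfl⟩
  · left; push_cast; linear_combination (r : ZMod (2 * n)) * hn
  · right; push_cast; linear_combination (r : ZMod (2 * n)) * hn

namespace QuaternionGroup

variable {n : ℕ}

theorem a_one_zpow (m : ℤ) : (a 1 : QuaternionGroup n) ^ m = a m := by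
  induction m using Int.induction_on with
  | zero => rw [zpow_zero, Int.cast_zero, a_zero]
  | succ m ih => rw [zpow_add_one, ih, a_mul_a]; push_cast; rfl
  | pred m ih =>
    rw [zpow_sub_one, ih]
    change a _ * a (-1) = _
    rw [a_mul_a]; push_cast; ring_nf

theorem mem_zpowers_xa_of_commute {g : QuaternionGroup n} {j : ZMod (2 * n)}
    (h : Commute g (xa j)) : g ∈ zpowers (xa j) := by
  have hsq : xa j ^ 2 = a n := xa_sq j
  cases g with
  | a i =>
    have : i + i = 0 := by
      have hc := h.eq
      rw [a_mul_xa, xa_mul_a, xa.injEq] at hc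
      linear_combination -hc
    rcases ZMod.eq_zero_or_eq_of_add_self_eq_zero this with rfl | rfl
    · rw [a_zero]; exact one_mem _
    · rw [← hsq]; exact pow_mem (mem_zpowers _) 2
  | xa i =>
    have : (i - j) + (i - j) = 0 := by
      have hc := h.eq
      rw [xa_mul_xa, xa_mul_xa, a.injEq] at hc
      linear_combination -hc
    rcases ZMod.eq_zero_or_eq_of_add_self_eq_zero this with hij | hij
    · rw [sub_eq_zero.mp hij]; exact mem_zpowers _
    · rw [sub_eq_iff_eq_add'.mp hij, ← xa_mul_a, ← hsq]
      exact mul_mem (mem_zpowers _) (pow_mem (mem_zpowers _) 2)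

theorem isCyclic_of_isMulCommutative (H : Subgroup (QuaternionGroup n)) [IsMulCommutative H] :
    IsCyclic H := by
  by_cases hxa : ∃ j, xa j ∈ H
  · obtain ⟨j, hj⟩ := hxa
    exact isCyclic_of_le fun g hg => mem_zpowers_xa_of_commute (setLike_mul_comm hg hj)
  · simp only [not_exists] at hxa
    refine isCyclic_of_le (H' := zpowers (a 1)) fun g hg => ?_
    cases g with
    | a i =>
      obtain ⟨m, rfl⟩ := ZMod.intCast_surjective i
      exact ⟨m, a_one_zpow m⟩
    | xa i => exact absurd hg (hxa i)

end QuaternionGroup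

theorem dicyclic_r1_eq_num_abelian_subgroups_general (n : ℕ) :
    Nat.card (Quot (genRel (QuaternionGroup n))) =
      Nat.card {H : Subgroup (QuaternionGroup n) // ∀ a ∈ H, ∀ b ∈ H, a * b = b * a} :=
  card_quot_genRel_eq_card_commutative_subgroups fun H _ =>
    QuaternionGroup.isCyclic_of_isMulCommutative H

theorem dicyclic_r1_eq_num_abelian_subgroups (n : ℕ) (hn : 1 ≤ n) :
    Nat.card (Quot (genRel (QuaternionGroup n))) =
      Nat.card {H : Subgroup (QuaternionGroup n) // ∀ a ∈ H, ∀ b ∈ H, a * b = b * a} :=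
  dicyclic_r1_eq_num_abelian_subgroups_general n
end

section
/- Let n ≥ 1 and let a_2(n) denote the number of orbits of the action of SL(2, ℤ/2ℤ) on the set of n×2 matrices with entries in ℤ/2ℤ, acting by right multiplication M ↦ M·A. Then 3 · a_2(n) = (2ⁿ + 1)(2^{n−1} + 1); equivalently a_2(n) = (2ⁿ + 1)(2^{n−1} + 1)/3, giving the sequence 2, 5, 15, 51, 187, 715, … . -/
/-- The orbit relation of the right-multiplication action of `SL(2, ℤ/pℤ)`
on `n × 2` matrices over `ℤ/pℤ`. -/
def slOrbRel (p n : ℕ) :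
    Matrix (Fin n) (Fin 2) (ZMod p) → Matrix (Fin n) (Fin 2) (ZMod p) → Prop :=
  fun M N => ∃ A : Matrix.SpecialLinearGroup (Fin 2) (ZMod p),
    M * (A : Matrix (Fin 2) (Fin 2) (ZMod p)) = N

/-!
By Burnside's lemma, `6 · a₂(n)` is the sum over `A ∈ SL(2, 𝔽₂)` of the number of matrices fixed
by `A`. A matrix is fixed by `A` iff each of its rows is, so `A` fixes `c(A)ⁿ` matrices, where
`c(A)` counts the row vectors fixed by `A`. On the six elements of `SL(2, 𝔽₂)` the values of `c`
are `4, 2, 2, 2, 1, 1`, hence `6 · a₂(n) = 4ⁿ + 3 · 2ⁿ + 2 = 2 (2ⁿ + 1)(2ⁿ⁻¹ + 1)` for `n ≥ 1`.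
-/

open Matrix MulAction MulOpposite

instance MulOpposite.fintype {α : Type*} [Fintype α] : Fintype αᵐᵒᵖ :=
  Fintype.ofEquiv α opEquiv

namespace Matrix.SpecialLinearGroup

variable {k m R : Type*} [Fintype k] [DecidableEq k] [CommRing R]

instance : MulAction (SpecialLinearGroup k R)ᵐᵒᵖ (Matrix m k R) where
  smul A M := M * (A.unop : Matrix k k R)
  one_smul := Matrix.mul_one
  mul_smul _ _ M := (Matrix.mul_assoc M _ _).symm

lemma op_smul_eq_mul (A : SpecialLinearGroup k R) (M : Matrix m k R) :
    op A • M = M * (A : Matrix k k R) := rfl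

def fixedByOpEquiv (A : SpecialLinearGroup k R) :
    fixedBy (Matrix m k R) (op A) ≃ (m → {v : k → R // v ᵥ* (A : Matrix k k R) = v}) where
  toFun M i := ⟨M.1 i, by rw [← Matrix.mul_apply_eq_vecMul, ← op_smul_eq_mul, M.2]⟩
  invFun f := ⟨Matrix.of fun i => (f i).1, by
    rw [mem_fixedBy, op_smul_eq_mul]
    funext i
    exact (Matrix.mul_apply_eq_vecMul _ _ i).trans (f i).2⟩
  left_inv _ := rfl
  right_inv _ := rfl

lemma card_fixedBy_op [Finite m] (A : SpecialLinearGroup k R) :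
    Nat.card (fixedBy (Matrix m k R) (op A)) =
      Nat.card {v : k → R // v ᵥ* (A : Matrix k k R) = v} ^ Nat.card m := by
  rw [Nat.card_congr (fixedByOpEquiv A), Nat.card_fun]

end Matrix.SpecialLinearGroup

lemma slOrbRel_eq_orbitRel (p n : ℕ) :
    slOrbRel p n = (orbitRel (SpecialLinearGroup (Fin 2) (ZMod p))ᵐᵒᵖ _).r := by
  funext M N
  rw [eq_iff_iff, ← Setoid.comm']
  simp [slOrbRel, orbitRel_apply, mem_orbit_iff, SpecialLinearGroup.op_smul_eq_mul]

lemma natCard_quot_slOrbRel (p n : ℕ) :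
    Nat.card (Quot (slOrbRel p n)) =
      Nat.card (orbitRel.Quotient (SpecialLinearGroup (Fin 2) (ZMod p))ᵐᵒᵖ
        (Matrix (Fin n) (Fin 2) (ZMod p))) := by
  rw [slOrbRel_eq_orbitRel]
  rfl

theorem MulAction.sum_natCard_fixedBy (G X : Type*) [Group G] [MulAction G X] [Fintype G]
    [Finite X] :
    ∑ g : G, Nat.card (fixedBy X g) = Nat.card (orbitRel.Quotient G X) * Nat.card G := by
  classical
  have := Fintype.ofFinite X
  simpa only [Nat.card_eq_fintype_card] using sum_card_fixedBy_eq_card_orbits_mul_card_group G X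

def Matrix.fixedVecCard {k R : Type*} [Fintype k] [DecidableEq k] [Fintype R]
    [DecidableEq R] [Semiring R] (A : Matrix k k R) : ℕ :=
  (Finset.univ.filter fun v : k → R => v ᵥ* A = v).card

theorem card_quot_slOrbRel_mul_card (p n : ℕ) [NeZero p] :
    Nat.card (Quot (slOrbRel p n)) * Nat.card (SpecialLinearGroup (Fin 2) (ZMod p)) =
      ∑ A : SpecialLinearGroup (Fin 2) (ZMod p),
        (A : Matrix (Fin 2) (Fin 2) (ZMod p)).fixedVecCard ^ n := by
  rw [natCard_quot_slOrbRel, Nat.card_congr (opEquiv (α := SpecialLinearGroup (Fin 2) (ZMod p))),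
    ← sum_natCard_fixedBy, ← opEquiv.sum_comp]
  refine Finset.sum_congr rfl fun A _ => ?_
  rw [opEquiv_apply, SpecialLinearGroup.card_fixedBy_op, Nat.card_eq_fintype_card,
    Fintype.card_subtype, Nat.card_fin, fixedVecCard]

lemma sum_fixedVecCard_pow_zmod_two (n : ℕ) :
    ∑ A : SpecialLinearGroup (Fin 2) (ZMod 2),
        (A : Matrix (Fin 2) (Fin 2) (ZMod 2)).fixedVecCard ^ n = 4 ^ n + 3 * 2 ^ n + 2 := by
  have hvalues : Finset.univ.val.map (fun A : SpecialLinearGroup (Fin 2) (ZMod 2) =>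
      (A : Matrix (Fin 2) (Fin 2) (ZMod 2)).fixedVecCard) = {4, 2, 2, 2, 1, 1} := by
    decide
  rw [Finset.sum, ← Function.comp_def (· ^ n), ← Multiset.map_map, hvalues]
  simp only [Multiset.insert_eq_cons, Multiset.map_cons, Multiset.sum_cons, Multiset.map_singleton,
    Multiset.sum_singleton, one_pow]
  ring

lemma card_specialLinearGroup_fin_two_zmod_two :
    Nat.card (SpecialLinearGroup (Fin 2) (ZMod 2)) = 6 := by
  rw [Nat.card_eq_fintype_card]
  decide

theorem orbit_count_formula_mod_two (n : ℕ) (hn : 1 ≤ n) :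
    3 * Nat.card (Quot (slOrbRel 2 n)) = (2 ^ n + 1) * (2 ^ (n - 1) + 1) := by
  obtain ⟨m, rfl⟩ : ∃ m, n = m + 1 := ⟨n - 1, by omega⟩
  have burnside := card_quot_slOrbRel_mul_card 2 (m + 1)
  rw [card_specialLinearGroup_fin_two_zmod_two, sum_fixedVecCard_pow_zmod_two] at burnside
  have h4 : (4 : ℕ) ^ m = (2 ^ m) ^ 2 := by
    rw [← pow_mul, mul_comm, pow_mul]; norm_num
  rw [pow_succ, pow_succ, h4] at burnside
  rw [Nat.add_sub_cancel, pow_succ]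
  linarith
end
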